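/- (Inductive step of Lemma 1) Let (τ_l)_{l∈ℤ} be a family of nowhere-vanishing functions τ_l : (ℕ≥1 → ℂ) → ℂ satisfying the mKP three-term equation. Fix an integer k ≥ 0 and an integer m ≥ 2, and suppose that the mKP addition formula with parameters (l, k, m) holds for every l ∈ ℤ, every x, all pairwise distinct α₁,…,α_{m+k} and all pairwise distinct β₁,…,β_{m−2} with βᵢ ≠ αⱼ. Then the mKP addition formula with parameters (l, k+1, m) holds for every l ∈ ℤ, every x, all pairwise distinct α₁,…,α_{m+k+1} and all pairwise distinct β₁,…,β_{m−2} with βᵢ ≠ αⱼ. -/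
import Mathlib


open scoped BigOperators

noncomputable section

/-- Sequences `x = (x₁, x₂, …)` indexed by positive integers, with complex entries. -/
abbrev TSeq : Type := {n : ℕ // 0 < n} → ℂ

/-- `[α]`, the sequence whose `n`-th entry is `αⁿ/n`. -/
noncomputable def ch (α : ℂ) : TSeq := fun n => α ^ (n : ℕ) / ((n : ℕ) : ℂ)

/-- The Vandermonde-type product `Δ(γ₁, …, γₙ) = ∏_{i<j} (γᵢ - γⱼ)`. -/
noncomputable def Vand {n : ℕ} (γ : Fin n → ℂ) : ℂ :=
  ∏ i, ∏ j ∈ Finset.Ioi i, (γ i - γ j)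

/-- `ζ_l(x; γ₁, …, γₙ) = Δ(γ₁, …, γₙ) · τ_l(x + [γ₁] + ⋯ + [γₙ])`. -/
noncomputable def zetal (τ : ℤ → TSeq → ℂ) (l : ℤ) (x : TSeq) {n : ℕ} (γ : Fin n → ℂ) : ℂ :=
  Vand γ * τ l (x + ∑ i, ch (γ i))

/-- The three-term equation of the mKP hierarchy. -/
def mKPThreeTerm (τ : ℤ → TSeq → ℂ) : Prop :=
  ∀ (l : ℤ) (x : TSeq) (α₁ α₂ α₃ : ℂ),
    (α₂ - α₃) * τ l (x + ch α₁) * τ (l+1) (x + ch α₂ + ch α₃)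
    - (α₁ - α₃) * τ l (x + ch α₂) * τ (l+1) (x + ch α₁ + ch α₃)
    + (α₁ - α₂) * τ l (x + ch α₃) * τ (l+1) (x + ch α₁ + ch α₂) = 0

/-- The tuple `γ₁, …, γ̂ᵢ, …, γₙ` obtained by omitting the `i`-th entry. -/
def omitIdx {n : ℕ} (γ : Fin n → ℂ) (i : Fin n) : Fin (n-1) → ℂ :=
  fun j =>
    if _ : (j : ℕ) < (i : ℕ) then γ ⟨j, by have := j.isLt; omega⟩
    else γ ⟨(j : ℕ) + 1, by have := j.isLt; omega⟩

/-- The mKP addition formula with parameters `(l, k, m)`: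
`∑_{i=1}^{m+k} (−1)^{i−1} ζ_l(x; β₁,…,β_{m−2},αᵢ) ζ_{l+k}(x; α₁,…,α̂ᵢ,…,α_{m+k}) = 0`. -/
def mKPAdd (τ : ℤ → TSeq → ℂ) (l : ℤ) (k m : ℕ) (x : TSeq)
    (α : Fin (m+k) → ℂ) (β : Fin (m-2) → ℂ) : Prop :=
  ∑ i : Fin (m+k), (-1 : ℂ) ^ (i : ℕ) * zetal τ l x (Fin.snoc β (α i)) *
    zetal τ (l + (k : ℤ)) x (omitIdx α i) = 0

/-! ### Auxiliary lemmas -/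

lemma zetal_def (τ : ℤ → TSeq → ℂ) (l : ℤ) (x : TSeq) {n : ℕ} (γ : Fin n → ℂ) :
    zetal τ l x γ = Vand γ * τ l (x + ∑ i, ch (γ i)) := rfl

lemma omitIdx_eq_succAbove {n : ℕ} (γ : Fin (n+1) → ℂ) (t : Fin (n+1)) (j : Fin n) :
    omitIdx γ t j = γ (t.succAbove j) := by
  unfold omitIdx Fin.succAbove
  by_cases h : (j : ℕ) < (t : ℕ)
  · rw [dif_pos h, if_pos (by simpa [Fin.lt_def] using h)]
    congr 1
  · rw [dif_neg h, if_neg (by simpa [Fin.lt_def] using h)]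
    congr 1

lemma omitIdx_last {n : ℕ} (γ : Fin n → ℂ) (z : ℂ) :
    omitIdx (Fin.snoc γ z) (Fin.last n) = γ := by
  funext j
  unfold omitIdx
  rw [dif_pos (by simpa using j.isLt)]
  exact Fin.snoc_castSucc _ _ _

lemma omitIdx_castSucc {n : ℕ} (γ : Fin (n+1) → ℂ) (z : ℂ) (t : Fin (n+1)) :
    omitIdx (Fin.snoc γ z) (Fin.castSucc t) = Fin.snoc (omitIdx γ t) z := by
  funext j
  refine Fin.lastCases ?_ (fun j' => ?_) j
  · unfold omitIdx
    rw [dif_neg (by simp; omega)]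
    have : (⟨(Fin.last n : ℕ) + 1, by omega⟩ : Fin (n+2)) = Fin.last (n+1) := by
      ext; simp
    rw [this, Fin.snoc_last, Fin.snoc_last]
  · rw [Fin.snoc_castSucc]
    unfold omitIdx
    by_cases h : (j' : ℕ) < (t : ℕ)
    · rw [dif_pos (by simpa using h), dif_pos h]
      have : (⟨((Fin.castSucc j') : ℕ), by omega⟩ : Fin (n+2)) =
          Fin.castSucc ⟨(j' : ℕ), by omega⟩ := by ext; simp
      rw [this, Fin.snoc_castSucc]
    · rw [dif_neg (by simpa using h), dif_neg h]
      have : (⟨((Fin.castSucc j') : ℕ) + 1, by omega⟩ : Fin (n+2)) =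
          Fin.castSucc ⟨(j' : ℕ) + 1, by omega⟩ := by ext; simp
      rw [this, Fin.snoc_castSucc]

lemma prod_sub_omit {n : ℕ} (γ : Fin (n+1) → ℂ) (t : Fin (n+1)) (w : ℂ) :
    ∏ j, (γ j - w) = (γ t - w) * ∏ j : Fin n, (omitIdx γ t j - w) := by
  simp only [omitIdx_eq_succAbove]
  exact Fin.prod_univ_succAbove (fun j => γ j - w) t

lemma sum_omit_ch {n : ℕ} (γ : Fin (n+1) → ℂ) (t : Fin (n+1)) :
    ∑ j, ch (γ j) = ch (γ t) + ∑ j : Fin n, ch (omitIdx γ t j) := by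
  simp only [omitIdx_eq_succAbove]
  exact Fin.sum_univ_succAbove (fun j => ch (γ j)) t

lemma prod_sub_snoc {n : ℕ} (γ : Fin n → ℂ) (z w : ℂ) :
    ∏ j, ((Fin.snoc γ z : Fin (n+1) → ℂ) j - w) = (∏ j, (γ j - w)) * (z - w) := by
  rw [Fin.prod_univ_castSucc]
  simp

lemma sum_snoc_ch {n : ℕ} (γ : Fin n → ℂ) (z : ℂ) :
    ∑ j, ch ((Fin.snoc γ z : Fin (n+1) → ℂ) j) = (∑ j, ch (γ j)) + ch z := by
  rw [Fin.sum_univ_castSucc]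
  simp

lemma Ioi_castSucc' {n : ℕ} (i : Fin n) :
    Finset.Ioi (Fin.castSucc i) = insert (Fin.last n) ((Finset.Ioi i).map Fin.castSuccEmb) := by
  ext j
  simp only [Finset.mem_Ioi, Finset.mem_insert, Finset.mem_map, Fin.lt_def,
    Fin.coe_castSucc, Fin.coe_castSuccEmb, Fin.ext_iff, Fin.val_last]
  have hj := j.isLt
  constructor
  · intro h
    by_cases hl : (j : ℕ) = n
    · exact Or.inl hl
    · exact Or.inr ⟨⟨(j : ℕ), by omega⟩, by simpa using h, by simp⟩
  · rintro (h | ⟨j', hj', hv⟩)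
    · omega
    · omega

lemma Vand_snoc {n : ℕ} (γ : Fin n → ℂ) (z : ℂ) :
    Vand ((Fin.snoc γ z : Fin (n+1) → ℂ)) = Vand γ * ∏ j, (γ j - z) := by
  have hlast : Finset.Ioi (Fin.last n) = (∅ : Finset (Fin (n+1))) := by
    ext j
    simp only [Finset.mem_Ioi, Finset.notMem_empty, iff_false, not_lt]
    exact Fin.le_last j
  have hnotmem : ∀ i : Fin n, Fin.last n ∉ (Finset.Ioi i).map Fin.castSuccEmb := by
    intro i hmem
    rcases Finset.mem_map.mp hmem with ⟨j, _, hj⟩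
    have := congrArg Fin.val hj
    simp only [Fin.coe_castSuccEmb, Fin.coe_castSucc, Fin.val_last] at this
    omega
  unfold Vand
  rw [Fin.prod_univ_castSucc]
  rw [hlast, Finset.prod_empty, mul_one]
  have key : ∀ i : Fin n,
      (∏ j ∈ Finset.Ioi (Fin.castSucc i),
        ((Fin.snoc γ z : Fin (n+1) → ℂ) (Fin.castSucc i) - (Fin.snoc γ z : Fin (n+1) → ℂ) j))
      = (∏ j ∈ Finset.Ioi i, (γ i - γ j)) * (γ i - z) := by
    intro i
    rw [Ioi_castSucc' i, Finset.prod_insert (hnotmem i), Finset.prod_map]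
    rw [Fin.snoc_last, Fin.snoc_castSucc, mul_comm]
    congr 1
    refine Finset.prod_congr rfl (fun j _ => ?_)
    rw [show Fin.castSuccEmb j = Fin.castSucc j from rfl, Fin.snoc_castSucc]
  rw [Finset.prod_congr rfl (fun i _ => key i), Finset.prod_mul_distrib]

lemma sum_zetal_cast (τ : ℤ → TSeq → ℂ) (l L : ℤ) (x : TSeq) {mβ : ℕ} (β : Fin mβ → ℂ)
    {n₁ n₂ : ℕ} (h : n₁ = n₂) (α : Fin n₂ → ℂ) :
    ∑ i : Fin n₂, (-1 : ℂ) ^ (i : ℕ) * zetal τ l x (Fin.snoc β (α i)) *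
      zetal τ L x (omitIdx α i)
    = ∑ i : Fin n₁, (-1 : ℂ) ^ (i : ℕ) * zetal τ l x (Fin.snoc β ((α ∘ Fin.cast h) i)) *
      zetal τ L x (omitIdx (α ∘ Fin.cast h) i) := by
  subst h; rfl

lemma snoc_decomp {n : ℕ} (γ : Fin (n+2) → ℂ) :
    (Fin.snoc (Fin.snoc (fun j : Fin n => γ (Fin.castSucc (Fin.castSucc j)))
        (γ (Fin.castSucc (Fin.last n))) : Fin (n+1) → ℂ)
      (γ (Fin.last (n+1))) : Fin (n+2) → ℂ) = γ := by
  funext j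
  refine Fin.lastCases ?_ (fun j' => ?_) j
  · rw [Fin.snoc_last]
  · rw [Fin.snoc_castSucc]
    refine Fin.lastCases ?_ (fun j'' => ?_) j'
    · rw [Fin.snoc_last]
    · rw [Fin.snoc_castSucc]

/-- The core computation: the inductive step, with all tuples in `snoc` normal form. -/
lemma step_core (τ : ℤ → TSeq → ℂ) (h3 : mKPThreeTerm τ) (M : ℕ) (l L : ℤ) (x : TSeq)
    {mβ : ℕ} (β : Fin mβ → ℂ) (α₀ : Fin (M+1) → ℂ) (b c : ℂ)
    (hbc : b ≠ c) (hC : τ L (x + ∑ j, ch (α₀ j)) ≠ 0)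
    (H1 : ∑ i : Fin (M+2), (-1 : ℂ) ^ (i : ℕ) *
        zetal τ l x (Fin.snoc β ((Fin.snoc α₀ b : Fin (M+2) → ℂ) i)) *
        zetal τ L x (omitIdx (Fin.snoc α₀ b : Fin (M+2) → ℂ) i) = 0)
    (H2 : ∑ i : Fin (M+2), (-1 : ℂ) ^ (i : ℕ) *
        zetal τ l x (Fin.snoc β ((Fin.snoc α₀ c : Fin (M+2) → ℂ) i)) *
        zetal τ L x (omitIdx (Fin.snoc α₀ c : Fin (M+2) → ℂ) i) = 0) :
    ∑ i : Fin (M+3), (-1 : ℂ) ^ (i : ℕ) *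
      zetal τ l x (Fin.snoc β ((Fin.snoc (Fin.snoc α₀ b : Fin (M+2) → ℂ) c : Fin (M+3) → ℂ) i)) *
      zetal τ (L+1) x (omitIdx (Fin.snoc (Fin.snoc α₀ b : Fin (M+2) → ℂ) c : Fin (M+3) → ℂ) i)
      = 0 := by
  set Φ : Fin (M+3) → ℂ := fun i => (-1 : ℂ) ^ (i : ℕ) *
      zetal τ l x (Fin.snoc β ((Fin.snoc (Fin.snoc α₀ b : Fin (M+2) → ℂ) c : Fin (M+3) → ℂ) i)) *
      zetal τ (L+1) x (omitIdx (Fin.snoc (Fin.snoc α₀ b : Fin (M+2) → ℂ) c : Fin (M+3) → ℂ) i)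
    with hΦ
  set g1 : Fin (M+2) → ℂ := fun i => (-1 : ℂ) ^ (i : ℕ) *
      zetal τ l x (Fin.snoc β ((Fin.snoc α₀ b : Fin (M+2) → ℂ) i)) *
      zetal τ L x (omitIdx (Fin.snoc α₀ b : Fin (M+2) → ℂ) i) with hg1
  set g2 : Fin (M+2) → ℂ := fun i => (-1 : ℂ) ^ (i : ℕ) *
      zetal τ l x (Fin.snoc β ((Fin.snoc α₀ c : Fin (M+2) → ℂ) i)) *
      zetal τ L x (omitIdx (Fin.snoc α₀ c : Fin (M+2) → ℂ) i) with hg2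
  set Cv : ℂ := τ L (x + ∑ j, ch (α₀ j)) with hCv
  set Tp : ℂ := τ (L+1) (x + ∑ j : Fin (M+2), ch ((Fin.snoc α₀ c : Fin (M+2) → ℂ) j)) with hTp
  set Tq : ℂ := τ (L+1) (x + ∑ j : Fin (M+2), ch ((Fin.snoc α₀ b : Fin (M+2) → ℂ) j)) with hTq
  set Dv : ℂ := ∏ j : Fin (M+2), ((Fin.snoc α₀ b : Fin (M+2) → ℂ) j - c) with hDv
  set Ev : ℂ := ∏ j : Fin (M+1), (α₀ j - b) with hEv
  suffices h : (b - c) * Cv * (∑ i, Φ i) = 0 by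
    rcases mul_eq_zero.mp h with h' | h'
    · exact absurd h' (mul_ne_zero (sub_ne_zero.mpr hbc) hC)
    · exact h'
  have hterm : ∀ i : Fin (M+1),
      (b - c) * Cv * Φ (Fin.castSucc (Fin.castSucc i)) =
        Tp * Dv * g1 (Fin.castSucc i) - Tq * ((b - c) * Ev) * g2 (Fin.castSucc i) := by
    intro i
    have h3i := h3 L (x + ∑ j : Fin M, ch (omitIdx α₀ i j)) (α₀ i) b c
    have e1 : x + ∑ j : Fin (M+2),
          ch ((Fin.snoc (Fin.snoc (omitIdx α₀ i : Fin M → ℂ) b : Fin (M+1) → ℂ) c : Fin (M+2) → ℂ) j)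
        = x + ∑ j : Fin M, ch (omitIdx α₀ i j) + ch b + ch c := by
      rw [sum_snoc_ch, sum_snoc_ch]; abel
    have e2 : x + ∑ j : Fin (M+2), ch ((Fin.snoc α₀ c : Fin (M+2) → ℂ) j)
        = x + ∑ j : Fin M, ch (omitIdx α₀ i j) + ch (α₀ i) + ch c := by
      rw [sum_snoc_ch, sum_omit_ch α₀ i]; abel
    have e3 : x + ∑ j : Fin (M+2), ch ((Fin.snoc α₀ b : Fin (M+2) → ℂ) j)
        = x + ∑ j : Fin M, ch (omitIdx α₀ i j) + ch (α₀ i) + ch b := by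
      rw [sum_snoc_ch, sum_omit_ch α₀ i]; abel
    have e4 : x + ∑ j, ch (α₀ j)
        = x + ∑ j : Fin M, ch (omitIdx α₀ i j) + ch (α₀ i) := by
      rw [sum_omit_ch α₀ i]; abel
    have e5 : x + ∑ j : Fin (M+1), ch ((Fin.snoc (omitIdx α₀ i : Fin M → ℂ) b : Fin (M+1) → ℂ) j)
        = x + ∑ j : Fin M, ch (omitIdx α₀ i j) + ch b := by
      rw [sum_snoc_ch]; abel
    have e6 : x + ∑ j : Fin (M+1), ch ((Fin.snoc (omitIdx α₀ i : Fin M → ℂ) c : Fin (M+1) → ℂ) j)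
        = x + ∑ j : Fin M, ch (omitIdx α₀ i j) + ch c := by
      rw [sum_snoc_ch]; abel
    simp only [hΦ, hg1, hg2, hCv, hTp, hTq, hDv, hEv, Fin.snoc_castSucc, Fin.coe_castSucc,
      omitIdx_castSucc]
    rw [zetal_def (n := M+2) τ (L+1) x
        (Fin.snoc (Fin.snoc (omitIdx α₀ i : Fin M → ℂ) b : Fin (M+1) → ℂ) c),
      zetal_def (n := M+1) τ L x (Fin.snoc (omitIdx α₀ i : Fin M → ℂ) b : Fin (M+1) → ℂ),
      zetal_def (n := M+1) τ L x (Fin.snoc (omitIdx α₀ i : Fin M → ℂ) c : Fin (M+1) → ℂ),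
      Vand_snoc (n := M+1) (Fin.snoc (omitIdx α₀ i : Fin M → ℂ) b : Fin (M+1) → ℂ) c,
      Vand_snoc (n := M) (omitIdx α₀ i) b, Vand_snoc (n := M) (omitIdx α₀ i) c,
      prod_sub_snoc (n := M) (omitIdx α₀ i) b c, prod_sub_snoc (n := M+1) α₀ b c,
      prod_sub_omit α₀ i b, prod_sub_omit α₀ i c,
      e1, e2, e3, e4, e5, e6]
    linear_combination ((-1 : ℂ) ^ (i : ℕ) * zetal τ l x (Fin.snoc β (α₀ i)) *
      Vand (omitIdx α₀ i : Fin M → ℂ) * (∏ j : Fin M, (omitIdx α₀ i j - b)) *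
      (∏ j : Fin M, (omitIdx α₀ i j - c)) * (b - c)) * h3i
  have hp : (b - c) * Cv * Φ (Fin.castSucc (Fin.last (M+1))) = Tp * Dv * g1 (Fin.last (M+1)) := by
    simp only [hΦ, hg1, hCv, hTp, hDv, Fin.snoc_castSucc, Fin.snoc_last, Fin.coe_castSucc,
      Fin.val_last, omitIdx_castSucc, omitIdx_last]
    rw [zetal_def τ (L+1) x (Fin.snoc α₀ c), zetal_def τ L x α₀,
      Vand_snoc α₀ c, prod_sub_snoc α₀ b c]
    ring
  have hq : (b - c) * Cv * Φ (Fin.last (M+2)) = -(Tq * ((b - c) * Ev) * g2 (Fin.last (M+1))) := by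
    simp only [hΦ, hg2, hCv, hTq, hEv, Fin.snoc_last, Fin.val_last, omitIdx_last]
    rw [zetal_def τ (L+1) x (Fin.snoc α₀ b), zetal_def τ L x α₀, Vand_snoc α₀ b]
    ring
  calc (b - c) * Cv * (∑ i, Φ i)
      = ∑ i : Fin (M+1), ((b - c) * Cv * Φ (Fin.castSucc (Fin.castSucc i)))
          + (b - c) * Cv * Φ (Fin.castSucc (Fin.last (M+1)))
          + (b - c) * Cv * Φ (Fin.last (M+2)) := by
        rw [Fin.sum_univ_castSucc (f := Φ),
          Fin.sum_univ_castSucc (f := fun i : Fin (M+2) => Φ (Fin.castSucc i)),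
          mul_add, mul_add, Finset.mul_sum]
    _ = ∑ i : Fin (M+1), (Tp * Dv * g1 (Fin.castSucc i) - Tq * ((b - c) * Ev) * g2 (Fin.castSucc i))
          + Tp * Dv * g1 (Fin.last (M+1))
          + -(Tq * ((b - c) * Ev) * g2 (Fin.last (M+1))) := by
        rw [Finset.sum_congr rfl (fun i _ => hterm i), hp, hq]
    _ = Tp * Dv * (∑ i : Fin (M+1), g1 (Fin.castSucc i) + g1 (Fin.last (M+1)))
          - Tq * ((b - c) * Ev) * (∑ i : Fin (M+1), g2 (Fin.castSucc i) + g2 (Fin.last (M+1))) := by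
        rw [Finset.sum_sub_distrib, ← Finset.mul_sum, ← Finset.mul_sum]; ring
    _ = Tp * Dv * (∑ i : Fin (M+2), g1 i) - Tq * ((b - c) * Ev) * (∑ i : Fin (M+2), g2 i) := by
        rw [← Fin.sum_univ_castSucc (f := g1), ← Fin.sum_univ_castSucc (f := g2)]
    _ = 0 := by rw [H1, H2]; ring

/-- The inductive step of Lemma 1: given the mKP three-term equation, the mKP
addition formulae with parameters `(·, k, m)` imply those with parameters `(·, k+1, m)`. -/
theorem mKP_additionFormula_inductive_step (τ : ℤ → TSeq → ℂ)
    (hτ : ∀ l x, τ l x ≠ 0) (h3 : mKPThreeTerm τ) (k m : ℕ) (hm : 2 ≤ m)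
    (ih : ∀ (l : ℤ) (x : TSeq) (α : Fin (m+k) → ℂ) (β : Fin (m-2) → ℂ),
      Function.Injective α → Function.Injective β →
      (∀ i j, β i ≠ α j) → mKPAdd τ l k m x α β) :
    ∀ (l : ℤ) (x : TSeq) (α : Fin (m+(k+1)) → ℂ) (β : Fin (m-2) → ℂ),
      Function.Injective α → Function.Injective β →
      (∀ i j, β i ≠ α j) → mKPAdd τ l (k+1) m x α β := by
  intro l x α β hα hβ hβα
  obtain ⟨M, hM⟩ : ∃ M, m + k = M + 2 := ⟨m + k - 2, by omega⟩
  have hcast : M + 3 = m + (k + 1) := by omega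
  have hL : l + ((k + 1 : ℕ) : ℤ) = l + (k : ℤ) + 1 := by push_cast; ring
  unfold mKPAdd
  rw [hL, sum_zetal_cast τ l (l + (k : ℤ) + 1) x β hcast α]
  set γ : Fin (M+3) → ℂ := α ∘ Fin.cast hcast with hγ
  have hγinj : Function.Injective γ := by
    rw [hγ]; exact hα.comp (Fin.cast_injective hcast)
  have hγval : ∀ j : Fin (M+3), γ j = α (Fin.cast hcast j) := fun j => rfl
  rw [← snoc_decomp γ]
  have h1 : omitIdx γ (Fin.last (M+2)) =
      (Fin.snoc (fun j : Fin (M+1) => γ (Fin.castSucc (Fin.castSucc j)))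
        (γ (Fin.castSucc (Fin.last (M+1)))) : Fin (M+2) → ℂ) := by
    conv_lhs => rw [← snoc_decomp γ]
    rw [omitIdx_last]
  have h2 : omitIdx γ (Fin.castSucc (Fin.last (M+1))) =
      (Fin.snoc (fun j : Fin (M+1) => γ (Fin.castSucc (Fin.castSucc j)))
        (γ (Fin.last (M+2))) : Fin (M+2) → ℂ) := by
    conv_lhs => rw [← snoc_decomp γ]
    rw [omitIdx_castSucc, omitIdx_last]
  have homit1 : omitIdx γ (Fin.last (M+2)) = γ ∘ (Fin.last (M+2)).succAbove :=
    funext (omitIdx_eq_succAbove γ (Fin.last (M+2)))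
  have homit2 : omitIdx γ (Fin.castSucc (Fin.last (M+1))) =
      γ ∘ (Fin.castSucc (Fin.last (M+1))).succAbove :=
    funext (omitIdx_eq_succAbove γ (Fin.castSucc (Fin.last (M+1))))
  have H1 : ∑ i : Fin (M+2), (-1 : ℂ) ^ (i : ℕ) *
      zetal τ l x (Fin.snoc β ((omitIdx γ (Fin.last (M+2))) i)) *
      zetal τ (l + (k : ℤ)) x (omitIdx (omitIdx γ (Fin.last (M+2))) i) = 0 := by
    have hinj : Function.Injective ((omitIdx γ (Fin.last (M+2))) ∘ Fin.cast hM) := by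
      rw [homit1]
      exact (hγinj.comp (Fin.succAbove_right_injective (p := Fin.last (M+2)))).comp
        (Fin.cast_injective hM)
    have hne : ∀ i j, β i ≠ ((omitIdx γ (Fin.last (M+2))) ∘ Fin.cast hM) j := by
      intro i j
      rw [homit1]
      exact hβα i _
    have HH := ih l x ((omitIdx γ (Fin.last (M+2))) ∘ Fin.cast hM) β hinj hβ hne
    unfold mKPAdd at HH
    rw [sum_zetal_cast τ l (l + (k : ℤ)) x β hM (omitIdx γ (Fin.last (M+2)))]
    exact HH
  have H2 : ∑ i : Fin (M+2), (-1 : ℂ) ^ (i : ℕ) *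
      zetal τ l x (Fin.snoc β ((omitIdx γ (Fin.castSucc (Fin.last (M+1)))) i)) *
      zetal τ (l + (k : ℤ)) x (omitIdx (omitIdx γ (Fin.castSucc (Fin.last (M+1)))) i) = 0 := by
    have hinj : Function.Injective
        ((omitIdx γ (Fin.castSucc (Fin.last (M+1)))) ∘ Fin.cast hM) := by
      rw [homit2]
      exact (hγinj.comp
        (Fin.succAbove_right_injective (p := Fin.castSucc (Fin.last (M+1))))).comp
        (Fin.cast_injective hM)
    have hne : ∀ i j, β i ≠ ((omitIdx γ (Fin.castSucc (Fin.last (M+1)))) ∘ Fin.cast hM) j := by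
      intro i j
      rw [homit2]
      exact hβα i _
    have HH := ih l x ((omitIdx γ (Fin.castSucc (Fin.last (M+1)))) ∘ Fin.cast hM) β hinj hβ hne
    unfold mKPAdd at HH
    rw [sum_zetal_cast τ l (l + (k : ℤ)) x β hM (omitIdx γ (Fin.castSucc (Fin.last (M+1))))]
    exact HH
  rw [h1] at H1
  rw [h2] at H2
  have hbc : γ (Fin.castSucc (Fin.last (M+1))) ≠ γ (Fin.last (M+2)) := by
    intro h
    have := congrArg Fin.val (hγinj h)
    simp at this
  exact step_core τ h3 M l (l + (k : ℤ)) x β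
    (fun j : Fin (M+1) => γ (Fin.castSucc (Fin.castSucc j)))
    (γ (Fin.castSucc (Fin.last (M+1)))) (γ (Fin.last (M+2))) hbc (hτ _ _) H1 H2

end
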